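/- Let T be a bimonad on a left autonomous monoidal category C. Then T admits a left antipode s^l if and only if the Eilenberg–Moore category of T-modules (with the monoidal structure lifted from C) is left autonomous. When a left antipode exists it is unique, and the left dual of a T-module (M,r) is given by (ˡM, s^l_M ∘ T(ˡr)) with evaluation ev_M and coevaluation coev_M. -/

import Mathlib

/-!
Everything rests on `map_snake_comp`: for a comonoidal `S`, if a pairing `e` and a copairing
`q` are `S`-linear, then so is the morphism `snake e q` they induce; both sides are computed from
the same composite `S P ⟶ S(P ⊗ M) ⊗ S Z`, once with the counit and once with
coassociativity. Hence a structure map `a` on `ˡM` making `ev_M` and `coev_M` linear is unique,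
commutes with transposes of module maps, and is an action (apply the lemma to `T ⋙ T`).
An antipode provides such structures `T(ˡr) ≫ s_M`. Conversely a dual `(N, e, d)` in `T`-Mod
transports to one on `ˡM` along `N ≅ ˡM`, and the structures on the free modules `T X`, composed
with `ˡη_X`, form an antipode; the antipode is recovered from them, which gives uniqueness.
-/

open CategoryTheory MonoidalCategory

namespace HopfMonadPaper

variable {C : Type*} [Category C] [MonoidalCategory C]

/-- A comonoidal (oplax monoidal) structure on an endofunctor `T`,
with coproduct `δ X Y : T(X ⊗ Y) ⟶ T(X) ⊗ T(Y)` and counit `ε : T(𝟙) ⟶ 𝟙`. -/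
structure Comonoidal (T : C ⥤ C) where
  δ : ∀ X Y : C, T.obj (X ⊗ Y) ⟶ T.obj X ⊗ T.obj Y
  ε : T.obj (𝟙_ C) ⟶ 𝟙_ C
  δ_natural : ∀ {X X' Y Y' : C} (f : X ⟶ X') (g : Y ⟶ Y'),
    T.map (f ⊗ₘ g) ≫ δ X' Y' = δ X Y ≫ (T.map f ⊗ₘ T.map g)
  coassoc : ∀ X Y Z : C,
    δ (X ⊗ Y) Z ≫ (δ X Y ⊗ₘ 𝟙 (T.obj Z)) ≫ (α_ (T.obj X) (T.obj Y) (T.obj Z)).hom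
      = T.map (α_ X Y Z).hom ≫ δ X (Y ⊗ Z) ≫ (𝟙 (T.obj X) ⊗ₘ δ Y Z)
  counit_left : ∀ X : C,
    δ (𝟙_ C) X ≫ (ε ⊗ₘ 𝟙 (T.obj X)) ≫ (λ_ (T.obj X)).hom = T.map (λ_ X).hom
  counit_right : ∀ X : C,
    δ X (𝟙_ C) ≫ (𝟙 (T.obj X) ⊗ₘ ε) ≫ (ρ_ (T.obj X)).hom = T.map (ρ_ X).hom

/-- The bimonad axioms: the product and unit of the monad are comonoidal. -/
structure IsBimonad (T : Monad C) (Q : Comonoidal T.toFunctor) : Prop where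
  mu_δ : ∀ X Y : C, T.μ.app (X ⊗ Y) ≫ Q.δ X Y
    = T.map (Q.δ X Y) ≫ Q.δ (T.obj X) (T.obj Y) ≫ (T.μ.app X ⊗ₘ T.μ.app Y)
  mu_ε : T.μ.app (𝟙_ C) ≫ Q.ε = T.map Q.ε ≫ Q.ε
  eta_δ : ∀ X Y : C, T.η.app (X ⊗ Y) ≫ Q.δ X Y = T.η.app X ⊗ₘ T.η.app Y
  eta_ε : T.η.app (𝟙_ C) ≫ Q.ε = 𝟙 (𝟙_ C)

/-- A choice of left duals: `d X = ˡX` with evaluation `ev X : ˡX ⊗ X ⟶ 𝟙`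
and coevaluation `coev X : 𝟙 ⟶ X ⊗ ˡX`, satisfying the triangle identities. -/
structure LeftDualData (C : Type*) [Category C] [MonoidalCategory C] where
  d : C → C
  ev : ∀ X : C, d X ⊗ X ⟶ 𝟙_ C
  coev : ∀ X : C, 𝟙_ C ⟶ X ⊗ d X
  tri1 : ∀ X : C, (ρ_ (d X)).inv ≫ (𝟙 (d X) ⊗ₘ coev X) ≫ (α_ (d X) X (d X)).inv
    ≫ (ev X ⊗ₘ 𝟙 (d X)) ≫ (λ_ (d X)).hom = 𝟙 (d X)
  tri2 : ∀ X : C, (λ_ X).inv ≫ (coev X ⊗ₘ 𝟙 X) ≫ (α_ X (d X) X).hom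
    ≫ (𝟙 X ⊗ₘ ev X) ≫ (ρ_ X).hom = 𝟙 X

/-- Left transpose (left dual) of a morphism. -/
def LeftDualData.tr (L : LeftDualData C) {X Y : C} (f : X ⟶ Y) : L.d Y ⟶ L.d X :=
  (ρ_ (L.d Y)).inv ≫ (𝟙 (L.d Y) ⊗ₘ L.coev X) ≫ (𝟙 (L.d Y) ⊗ₘ (f ⊗ₘ 𝟙 (L.d X)))
    ≫ (α_ (L.d Y) Y (L.d X)).inv ≫ (L.ev Y ⊗ₘ 𝟙 (L.d X)) ≫ (λ_ (L.d X)).hom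

/-- A choice of right duals: `d X = ʳX` with evaluation `ev X : X ⊗ ʳX ⟶ 𝟙`
and coevaluation `coev X : 𝟙 ⟶ ʳX ⊗ X`, satisfying the triangle identities. -/
structure RightDualData (C : Type*) [Category C] [MonoidalCategory C] where
  d : C → C
  ev : ∀ X : C, X ⊗ d X ⟶ 𝟙_ C
  coev : ∀ X : C, 𝟙_ C ⟶ d X ⊗ X
  tri1 : ∀ X : C, (ρ_ X).inv ≫ (𝟙 X ⊗ₘ coev X) ≫ (α_ X (d X) X).inv
    ≫ (ev X ⊗ₘ 𝟙 X) ≫ (λ_ X).hom = 𝟙 X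
  tri2 : ∀ X : C, (λ_ (d X)).inv ≫ (coev X ⊗ₘ 𝟙 (d X)) ≫ (α_ (d X) X (d X)).hom
    ≫ (𝟙 (d X) ⊗ₘ ev X) ≫ (ρ_ (d X)).hom = 𝟙 (d X)

/-- Right transpose (right dual) of a morphism. -/
def RightDualData.tr (R : RightDualData C) {X Y : C} (f : X ⟶ Y) : R.d Y ⟶ R.d X :=
  (λ_ (R.d Y)).inv ≫ (R.coev X ⊗ₘ 𝟙 (R.d Y)) ≫ (α_ (R.d X) X (R.d Y)).hom
    ≫ (𝟙 (R.d X) ⊗ₘ (f ⊗ₘ 𝟙 (R.d Y))) ≫ (𝟙 (R.d X) ⊗ₘ R.ev Y) ≫ (ρ_ (R.d X)).hom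

/-- The axioms for a left antipode `s X : T(ˡT(X)) ⟶ ˡX` of a bimonad. -/
structure IsLeftAntipode (T : Monad C) (Q : Comonoidal T.toFunctor) (L : LeftDualData C)
    (s : ∀ X : C, T.obj (L.d (T.obj X)) ⟶ L.d X) : Prop where
  natural : ∀ {X Y : C} (f : X ⟶ Y),
    T.map (L.tr (T.map f)) ≫ s X = s Y ≫ L.tr f
  lant1 : ∀ X : C,
    T.map (L.tr (T.η.app X) ⊗ₘ 𝟙 X) ≫ T.map (L.ev X) ≫ Q.ε
      = Q.δ (L.d (T.obj X)) X
        ≫ ((T.map (L.tr (T.μ.app X)) ≫ s (T.obj X)) ⊗ₘ 𝟙 (T.obj X)) ≫ L.ev (T.obj X)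
  lant2 : ∀ X : C,
    Q.ε ≫ L.coev X ≫ (T.η.app X ⊗ₘ 𝟙 (L.d X))
      = T.map (L.coev (T.obj X)) ≫ Q.δ (T.obj X) (L.d (T.obj X)) ≫ (T.μ.app X ⊗ₘ s X)

/-- The axioms for a right antipode `s X : T(ʳT(X)) ⟶ ʳX` of a bimonad. -/
structure IsRightAntipode (T : Monad C) (Q : Comonoidal T.toFunctor) (R : RightDualData C)
    (s : ∀ X : C, T.obj (R.d (T.obj X)) ⟶ R.d X) : Prop where
  natural : ∀ {X Y : C} (f : X ⟶ Y),
    T.map (R.tr (T.map f)) ≫ s X = s Y ≫ R.tr f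
  rant1 : ∀ X : C,
    T.map (𝟙 X ⊗ₘ R.tr (T.η.app X)) ≫ T.map (R.ev X) ≫ Q.ε
      = Q.δ X (R.d (T.obj X))
        ≫ (𝟙 (T.obj X) ⊗ₘ (T.map (R.tr (T.μ.app X)) ≫ s (T.obj X))) ≫ R.ev (T.obj X)
  rant2 : ∀ X : C,
    Q.ε ≫ R.coev X ≫ (𝟙 (R.d X) ⊗ₘ T.η.app X)
      = T.map (R.coev (T.obj X)) ≫ Q.δ (R.d (T.obj X)) (T.obj X) ≫ (s X ⊗ₘ T.μ.app X)

/-- The canonical morphism `X ⟶ ʳ(ˡX)`. -/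
def canRL (L : LeftDualData C) (R : RightDualData C) (X : C) : X ⟶ R.d (L.d X) :=
  (λ_ X).inv ≫ (R.coev (L.d X) ⊗ₘ 𝟙 X) ≫ (α_ (R.d (L.d X)) (L.d X) X).hom
    ≫ (𝟙 (R.d (L.d X)) ⊗ₘ L.ev X) ≫ (ρ_ (R.d (L.d X))).hom

/-- The canonical morphism `ʳ(ˡX) ⟶ X`. -/
def canRLinv (L : LeftDualData C) (R : RightDualData C) (X : C) : R.d (L.d X) ⟶ X :=
  (λ_ (R.d (L.d X))).inv ≫ (L.coev X ⊗ₘ 𝟙 (R.d (L.d X)))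
    ≫ (α_ X (L.d X) (R.d (L.d X))).hom ≫ (𝟙 X ⊗ₘ R.ev (L.d X)) ≫ (ρ_ X).hom

/-- The canonical morphism `X ⟶ ˡ(ʳX)`. -/
def canLR (L : LeftDualData C) (R : RightDualData C) (X : C) : X ⟶ L.d (R.d X) :=
  (ρ_ X).inv ≫ (𝟙 X ⊗ₘ L.coev (R.d X)) ≫ (α_ X (R.d X) (L.d (R.d X))).inv
    ≫ (R.ev X ⊗ₘ 𝟙 (L.d (R.d X))) ≫ (λ_ (L.d (R.d X))).hom

/-- The canonical morphism `ˡ(ʳX) ⟶ X`. -/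
def canLRinv (L : LeftDualData C) (R : RightDualData C) (X : C) : L.d (R.d X) ⟶ X :=
  (ρ_ (L.d (R.d X))).inv ≫ (𝟙 (L.d (R.d X)) ⊗ₘ R.coev X)
    ≫ (α_ (L.d (R.d X)) (R.d X) X).inv ≫ (L.ev (R.d X) ⊗ₘ 𝟙 X) ≫ (λ_ X).hom

section Snake

variable {P' M P : C}

/- The two composites of the triangle identities, for an arbitrary pairing and copairing. -/
def snake (p : P' ⊗ M ⟶ 𝟙_ C) (q : 𝟙_ C ⟶ M ⊗ P) : P' ⟶ P :=
  (ρ_ P').inv ≫ (𝟙 P' ⊗ₘ q) ≫ (α_ P' M P).inv ≫ (p ⊗ₘ 𝟙 P) ≫ (λ_ P).hom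

def zigzag {A B D : C} (q : 𝟙_ C ⟶ A ⊗ B) (e : B ⊗ D ⟶ 𝟙_ C) : D ⟶ A :=
  (λ_ D).inv ≫ (q ⊗ₘ 𝟙 D) ≫ (α_ A B D).hom ≫ (𝟙 A ⊗ₘ e) ≫ (ρ_ A).hom

lemma comp_snake {A : C} (j : A ⟶ P') (p : P' ⊗ M ⟶ 𝟙_ C) (q : 𝟙_ C ⟶ M ⊗ P) :
    j ≫ snake p q = snake (j ▷ M ≫ p) q := by
  calc j ≫ snake p q = 𝟙 _ ⊗≫ (j ▷ 𝟙_ C ≫ P' ◁ q) ⊗≫ p ▷ P ⊗≫ 𝟙 _ := by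
        simp only [snake, tensorHom_id, id_tensorHom]; monoidal
    _ = 𝟙 _ ⊗≫ (A ◁ q ≫ j ▷ (M ⊗ P)) ⊗≫ p ▷ P ⊗≫ 𝟙 _ := by rw [← whisker_exchange]
    _ = snake (j ▷ M ≫ p) q := by simp only [snake, tensorHom_id, id_tensorHom]; monoidal

lemma snake_whiskerRight_comp {M' : C} (p : P' ⊗ M ⟶ 𝟙_ C) (q : 𝟙_ C ⟶ M ⊗ P)
    (e : P ⊗ M' ⟶ 𝟙_ C) : snake p q ▷ M' ≫ e = P' ◁ zigzag q e ≫ p := by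
  calc snake p q ▷ M' ≫ e = 𝟙 _ ⊗≫ P' ◁ q ▷ M' ⊗≫ (p ▷ (P ⊗ M') ≫ 𝟙_ C ◁ e) ⊗≫ 𝟙 _ := by
        simp only [snake, tensorHom_id, id_tensorHom]; monoidal
    _ = 𝟙 _ ⊗≫ P' ◁ q ▷ M' ⊗≫ ((P' ⊗ M) ◁ e ≫ p ▷ 𝟙_ C) ⊗≫ 𝟙 _ := by rw [whisker_exchange]
    _ = P' ◁ zigzag q e ≫ p := by simp only [zigzag, tensorHom_id, id_tensorHom]; monoidal

lemma comp_whiskerLeft_snake {M₀ : C} (q₀ : 𝟙_ C ⟶ M₀ ⊗ P') (p : P' ⊗ M ⟶ 𝟙_ C)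
    (q : 𝟙_ C ⟶ M ⊗ P) : q₀ ≫ M₀ ◁ snake p q = q ≫ zigzag q₀ p ▷ P := by
  calc q₀ ≫ M₀ ◁ snake p q = 𝟙 _ ⊗≫ (q₀ ▷ 𝟙_ C ≫ (M₀ ⊗ P') ◁ q) ⊗≫ M₀ ◁ p ▷ P ⊗≫ 𝟙 _ := by
        simp only [snake, tensorHom_id, id_tensorHom]; monoidal
    _ = 𝟙 _ ⊗≫ (𝟙_ C ◁ q ≫ q₀ ▷ (M ⊗ P)) ⊗≫ M₀ ◁ p ▷ P ⊗≫ 𝟙 _ := by rw [← whisker_exchange]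
    _ = q ≫ zigzag q₀ p ▷ P := by simp only [zigzag, tensorHom_id, id_tensorHom]; monoidal

lemma zigzag_whiskerLeft_comp {A B D D' : C} (q : 𝟙_ C ⟶ A ⊗ B) (f : D' ⟶ D)
    (e : B ⊗ D ⟶ 𝟙_ C) : zigzag q (B ◁ f ≫ e) = f ≫ zigzag q e := by
  calc zigzag q (B ◁ f ≫ e) = 𝟙 _ ⊗≫ (q ▷ D' ≫ (A ⊗ B) ◁ f) ⊗≫ A ◁ e ⊗≫ 𝟙 _ := by
        simp only [zigzag, tensorHom_id, id_tensorHom]; monoidal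
    _ = 𝟙 _ ⊗≫ (𝟙_ C ◁ f ≫ q ▷ D) ⊗≫ A ◁ e ⊗≫ 𝟙 _ := by rw [← whisker_exchange]
    _ = f ≫ zigzag q e := by simp only [zigzag, tensorHom_id, id_tensorHom]; monoidal

end Snake

namespace LeftDualData

variable (L : LeftDualData C)

lemma snake_ev_coev (X : C) : snake (L.ev X) (L.coev X) = 𝟙 (L.d X) := L.tri1 X

lemma zigzag_coev_ev (X : C) : zigzag (L.coev X) (L.ev X) = 𝟙 X := L.tri2 X

lemma tr_eq_snake {X Y : C} (f : X ⟶ Y) : L.tr f = snake (L.d Y ◁ f ≫ L.ev Y) (L.coev X) := by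
  simp only [tr, snake, tensorHom_id, id_tensorHom]; monoidal

variable {L}

lemma hom_ext_ev {A X : C} {j j' : A ⟶ L.d X} (h : j ▷ X ≫ L.ev X = j' ▷ X ≫ L.ev X) :
    j = j' := by
  rw [← Category.comp_id j, ← Category.comp_id j', ← L.snake_ev_coev, comp_snake, comp_snake, h]

variable (L)

lemma tr_whiskerRight_ev {X Y : C} (f : X ⟶ Y) :
    L.tr f ▷ X ≫ L.ev X = L.d Y ◁ f ≫ L.ev Y := by
  rw [tr_eq_snake, snake_whiskerRight_comp, zigzag_coev_ev, whiskerLeft_id, Category.id_comp]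

lemma coev_whiskerLeft_tr {X Y : C} (f : X ⟶ Y) :
    L.coev Y ≫ Y ◁ L.tr f = L.coev X ≫ f ▷ L.d X := by
  rw [tr_eq_snake, comp_whiskerLeft_snake, zigzag_whiskerLeft_comp, zigzag_coev_ev,
    Category.comp_id]

@[simp]
lemma tr_id (X : C) : L.tr (𝟙 X) = 𝟙 (L.d X) := by
  rw [tr_eq_snake, whiskerLeft_id, Category.id_comp, snake_ev_coev]

lemma tr_comp {X Y Z : C} (f : X ⟶ Y) (g : Y ⟶ Z) : L.tr (f ≫ g) = L.tr g ≫ L.tr f := by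
  apply hom_ext_ev
  rw [comp_whiskerRight, Category.assoc, tr_whiskerRight_ev, tr_whiskerRight_ev,
    ← whisker_exchange_assoc, tr_whiskerRight_ev, whiskerLeft_comp_assoc]

end LeftDualData

namespace Comonoidal

variable {S : C ⥤ C} (Q : Comonoidal S)

lemma δ_natural_left {X X' : C} (f : X ⟶ X') (Y : C) :
    S.map (f ▷ Y) ≫ Q.δ X' Y = Q.δ X Y ≫ S.map f ▷ S.obj Y := by
  simpa using Q.δ_natural f (𝟙 Y)

lemma δ_natural_right (X : C) {Y Y' : C} (g : Y ⟶ Y') :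
    S.map (X ◁ g) ≫ Q.δ X Y' = Q.δ X Y ≫ S.obj X ◁ S.map g := by
  simpa using Q.δ_natural (𝟙 X) g

lemma coassoc_whisker (X Y Z : C) :
    Q.δ (X ⊗ Y) Z ≫ Q.δ X Y ▷ S.obj Z ≫ (α_ _ _ _).hom
      = S.map (α_ X Y Z).hom ≫ Q.δ X (Y ⊗ Z) ≫ S.obj X ◁ Q.δ Y Z := by
  simpa using Q.coassoc X Y Z

lemma coassoc_inv (X Y Z : C) :
    S.map (α_ X Y Z).inv ≫ Q.δ (X ⊗ Y) Z ≫ Q.δ X Y ▷ S.obj Z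
      = Q.δ X (Y ⊗ Z) ≫ S.obj X ◁ Q.δ Y Z ≫ (α_ _ _ _).inv := by
  rw [← cancel_epi (S.map (α_ X Y Z).hom), ← S.map_comp_assoc, Iso.hom_inv_id, S.map_id,
    Category.id_comp, ← reassoc_of% (Q.coassoc_whisker X Y Z), Iso.hom_inv_id, Category.comp_id]

lemma δ_counit_left (X : C) :
    Q.δ (𝟙_ C) X ≫ Q.ε ▷ S.obj X = S.map (λ_ X).hom ≫ (λ_ _).inv := by
  rw [← Q.counit_left]; simp

lemma δ_counit_right (X : C) :
    Q.δ X (𝟙_ C) ≫ S.obj X ◁ Q.ε = S.map (ρ_ X).hom ≫ (ρ_ _).inv := by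
  rw [← Q.counit_right]; simp

variable {G : C ⥤ C}

def comp (Q' : Comonoidal G) : Comonoidal (S ⋙ G) where
  δ X Y := G.map (Q.δ X Y) ≫ Q'.δ (S.obj X) (S.obj Y)
  ε := G.map Q.ε ≫ Q'.ε
  δ_natural f g := by
    simp only [Functor.comp_map, ← G.map_comp_assoc, Q.δ_natural, G.map_comp, Category.assoc,
      Q'.δ_natural]
  coassoc X Y Z := by
    simp only [Functor.comp_obj, Functor.comp_map, tensorHom_id, id_tensorHom, comp_whiskerRight,
      whiskerLeft_comp, Category.assoc]
    rw [← reassoc_of% (Q'.δ_natural_left (Q.δ X Y) (S.obj Z)), Q'.coassoc_whisker]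
    simp only [← G.map_comp_assoc]
    rw [Q.coassoc_whisker]
    simp only [G.map_comp, Category.assoc, reassoc_of% (Q'.δ_natural_right (S.obj X) (Q.δ Y Z))]
  counit_left X := by
    simp only [Functor.comp_obj, Functor.comp_map, tensorHom_id, comp_whiskerRight,
      Category.assoc]
    rw [← reassoc_of% (Q'.δ_natural_left Q.ε (S.obj X)), reassoc_of% (Q'.δ_counit_left _),
      Iso.inv_hom_id, Category.comp_id, ← G.map_comp, ← G.map_comp, ← Category.assoc,
      Q.δ_counit_left, Category.assoc, Iso.inv_hom_id, Category.comp_id]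
  counit_right X := by
    simp only [Functor.comp_obj, Functor.comp_map, id_tensorHom, whiskerLeft_comp,
      Category.assoc]
    rw [← reassoc_of% (Q'.δ_natural_right (S.obj X) Q.ε), reassoc_of% (Q'.δ_counit_right _),
      Iso.inv_hom_id, Category.comp_id, ← G.map_comp, ← G.map_comp, ← Category.assoc,
      Q.δ_counit_right, Category.assoc, Iso.inv_hom_id, Category.comp_id]

end Comonoidal

section Transfer

variable {S : C ⥤ C} (Q : Comonoidal S)

lemma map_snake_comp {M P P₂ Z Zc : C} (r : S.obj M ⟶ M) (e : P ⊗ M ⟶ 𝟙_ C)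
    (q : 𝟙_ C ⟶ M ⊗ Z) (e₂ : P₂ ⊗ M ⟶ 𝟙_ C) (q₂ : 𝟙_ C ⟶ M ⊗ Zc) (g : S.obj P ⟶ P₂)
    (h : S.obj Z ⟶ Zc) (hev : Q.δ P M ≫ (g ⊗ₘ r) ≫ e₂ = S.map e ≫ Q.ε)
    (hcoev : S.map q ≫ Q.δ M Z ≫ (r ⊗ₘ h) = Q.ε ≫ q₂) :
    S.map (snake e q) ≫ h = g ≫ snake e₂ q₂ := by
  set Φ := S.map ((ρ_ P).inv ≫ P ◁ q ≫ (α_ P M Z).inv) ≫ Q.δ (P ⊗ M) Z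
  have counit_side : Φ ≫ ((S.map e ≫ Q.ε) ⊗ₘ h) ≫ (λ_ Zc).hom = S.map (snake e q) ≫ h := by
    simp only [Φ, MonoidalCategory.tensorHom_def, comp_whiskerRight, Category.assoc,
      leftUnitor_naturality]
    rw [← reassoc_of% (Q.δ_natural_left e Z), reassoc_of% (Q.δ_counit_left Z),
      Iso.inv_hom_id_assoc]
    simp only [snake, tensorHom_id, id_tensorHom, Functor.map_comp, Category.assoc]
  have coassoc_side :
      Φ ≫ ((Q.δ P M ≫ (g ⊗ₘ r) ≫ e₂) ⊗ₘ h) ≫ (λ_ Zc).hom = g ≫ snake e₂ q₂ := by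
    have split : (Q.δ P M ≫ (g ⊗ₘ r) ≫ e₂) ⊗ₘ h
        = Q.δ P M ▷ S.obj Z ≫ ((g ⊗ₘ r) ⊗ₘ h) ≫ e₂ ▷ Zc := by
      simp only [← tensorHom_id, tensorHom_comp_tensorHom, Category.id_comp, Category.comp_id]
    calc Φ ≫ ((Q.δ P M ≫ (g ⊗ₘ r) ≫ e₂) ⊗ₘ h) ≫ (λ_ Zc).hom
        = S.map (ρ_ P).inv ≫ Q.δ P (𝟙_ C) ≫ (g ⊗ₘ (S.map q ≫ Q.δ M Z ≫ (r ⊗ₘ h)))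
            ≫ (α_ _ _ _).inv ≫ e₂ ▷ Zc ≫ (λ_ Zc).hom := by
          simp only [Φ, split, Functor.map_comp, Category.assoc]
          rw [reassoc_of% (Q.coassoc_inv P M Z), reassoc_of% (Q.δ_natural_right P q),
            ← associator_inv_naturality_assoc]
          simp only [← id_tensorHom, tensorHom_comp_tensorHom_assoc, Category.id_comp]
      _ = S.map (ρ_ P).inv ≫ (Q.δ P (𝟙_ C) ≫ S.obj P ◁ Q.ε) ≫ (g ⊗ₘ q₂)
            ≫ (α_ _ _ _).inv ≫ e₂ ▷ Zc ≫ (λ_ Zc).hom := by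
          rw [hcoev]
          simp only [← id_tensorHom, Category.assoc, tensorHom_comp_tensorHom_assoc,
            Category.id_comp]
      _ = g ≫ snake e₂ q₂ := by
          rw [Q.δ_counit_right, Category.assoc, ← S.map_comp_assoc, Iso.inv_hom_id, S.map_id,
            Category.id_comp, MonoidalCategory.tensorHom_def, Category.assoc,
            ← rightUnitor_inv_naturality_assoc]
          simp only [snake, tensorHom_id, id_tensorHom]
  rw [← counit_side, ← hev, coassoc_side]

end Transfer

section DualAction

variable {T : Monad C} (Q : Comonoidal T.toFunctor) (L : LeftDualData C)

def IsEvLinear (M : T.Algebra) (a : T.obj (L.d M.A) ⟶ L.d M.A) : Prop :=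
  Q.δ (L.d M.A) M.A ≫ (a ⊗ₘ M.a) ≫ L.ev M.A = T.map (L.ev M.A) ≫ Q.ε

def IsCoevLinear (M : T.Algebra) (a : T.obj (L.d M.A) ⟶ L.d M.A) : Prop :=
  T.map (L.coev M.A) ≫ Q.δ M.A (L.d M.A) ≫ (M.a ⊗ₘ a) = Q.ε ≫ L.coev M.A

variable {Q L}

lemma map_tr_comp_eq_comp_tr {M M' : T.Algebra} {a : T.obj (L.d M.A) ⟶ L.d M.A}
    {a' : T.obj (L.d M'.A) ⟶ L.d M'.A} (hev : IsEvLinear Q L M a) (hcoev : IsCoevLinear Q L M a)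
    (hev' : IsEvLinear Q L M' a') (φ : M ⟶ M') :
    T.map (L.tr φ.f) ≫ a = a' ≫ L.tr φ.f := by
  set e := L.tr φ.f ▷ M.A ≫ L.ev M.A
  have lhs_linear : Q.δ (L.d M'.A) M.A ≫ ((T.map (L.tr φ.f) ≫ a) ⊗ₘ M.a) ≫ L.ev M.A
      = T.map e ≫ Q.ε := by
    rw [← whiskerRight_comp_tensorHom_assoc, ← reassoc_of% (Q.δ_natural_left _ M.A), hev,
      T.map_comp_assoc]
  have rhs_linear : Q.δ (L.d M'.A) M.A ≫ ((a' ≫ L.tr φ.f) ⊗ₘ M.a) ≫ L.ev M.A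
      = T.map e ≫ Q.ε := by
    rw [← tensorHom_comp_whiskerRight_assoc, LeftDualData.tr_whiskerRight_ev,
      tensorHom_comp_whiskerLeft_assoc, ← φ.h, ← whiskerLeft_comp_tensorHom_assoc,
      ← reassoc_of% (Q.δ_natural_right _ φ.f), hev', ← T.map_comp_assoc,
      ← LeftDualData.tr_whiskerRight_ev]
  have h₁ := map_snake_comp Q M.a e (L.coev M.A) (L.ev M.A) (L.coev M.A) _ a lhs_linear hcoev
  have h₂ := map_snake_comp Q M.a e (L.coev M.A) (L.ev M.A) (L.coev M.A) _ a rhs_linear hcoev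
  rw [L.snake_ev_coev, Category.comp_id] at h₁ h₂
  rw [← h₁, h₂]

lemma eq_of_isEvLinear {M : T.Algebra} {a a' : T.obj (L.d M.A) ⟶ L.d M.A}
    (hev : IsEvLinear Q L M a) (hcoev : IsCoevLinear Q L M a) (hev' : IsEvLinear Q L M a') :
    a = a' := by
  simpa using map_tr_comp_eq_comp_tr hev hcoev hev' (𝟙 M)

lemma IsEvLinear.unit (hB : IsBimonad T Q) {M : T.Algebra} {a : T.obj (L.d M.A) ⟶ L.d M.A}
    (hev : IsEvLinear Q L M a) : T.η.app (L.d M.A) ≫ a = 𝟙 (L.d M.A) := by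
  apply LeftDualData.hom_ext_ev
  have hη : T.η.app _ ≫ T.map (L.ev M.A) = L.ev M.A ≫ T.η.app _ := (T.η.naturality _).symm
  have h := T.η.app _ ≫= hev
  rw [reassoc_of% (hB.eta_δ (L.d M.A) M.A), tensorHom_comp_tensorHom_assoc, M.unit, reassoc_of% hη,
    hB.eta_ε, Category.comp_id, tensorHom_id] at h
  exact h.trans (by simp)

lemma IsEvLinear.assoc (hB : IsBimonad T Q) {M : T.Algebra} {a : T.obj (L.d M.A) ⟶ L.d M.A}
    (hev : IsEvLinear Q L M a) (hcoev : IsCoevLinear Q L M a) :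
    T.μ.app (L.d M.A) ≫ a = T.map a ≫ a := by
  have hev₂ : (T.map (Q.δ (L.d M.A) M.A) ≫ Q.δ _ _) ≫ ((T.μ.app _ ≫ a) ⊗ₘ (T.map M.a ≫ M.a))
      ≫ L.ev M.A = T.map (T.map (L.ev M.A)) ≫ T.map Q.ε ≫ Q.ε := by
    have hμ : T.μ.app _ ≫ T.map (L.ev M.A) = T.map (T.map (L.ev M.A)) ≫ T.μ.app _ :=
      (T.μ.naturality _).symm
    rw [← M.assoc, ← tensorHom_comp_tensorHom, Category.assoc, Category.assoc,
      ← reassoc_of% (hB.mu_δ (L.d M.A) M.A), hev, reassoc_of% hμ, hB.mu_ε]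
  have hcoev₂ : T.map (T.map (L.coev M.A)) ≫ (T.map (Q.δ M.A (L.d M.A)) ≫ Q.δ _ _)
      ≫ ((T.map M.a ≫ M.a) ⊗ₘ (T.map a ≫ a)) = (T.map Q.ε ≫ Q.ε) ≫ L.coev M.A := by
    rw [← tensorHom_comp_tensorHom, Category.assoc, Category.assoc,
      ← reassoc_of% (Q.δ_natural M.a a), ← T.map_comp_assoc, ← T.map_comp_assoc,
      Category.assoc, hcoev, T.map_comp_assoc, hcoev]
  have h := map_snake_comp (Q.comp Q) (T.map M.a ≫ M.a) (L.ev M.A) (L.coev M.A)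
    (L.ev M.A) (L.coev M.A) (T.μ.app (L.d M.A) ≫ a) (T.map a ≫ a) hev₂ hcoev₂
  simpa [L.snake_ev_coev] using h.symm

end DualAction

namespace IsLeftAntipode

variable {T : Monad C} {Q : Comonoidal T.toFunctor} {L : LeftDualData C}
  {s : ∀ X : C, T.obj (L.d (T.obj X)) ⟶ L.d X}

lemma isEvLinear (hs : IsLeftAntipode T Q L s) (M : T.Algebra) :
    IsEvLinear Q L M (T.map (L.tr M.a) ≫ s M.A) := by
  have hs_tr : (T.map (L.tr M.a) ≫ s M.A) ≫ L.tr M.a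
      = T.map (L.tr M.a) ≫ T.map (L.tr (T.μ.app M.A)) ≫ s (T.obj M.A) := by
    rw [Category.assoc, ← hs.natural, ← T.map_comp_assoc, ← T.map_comp_assoc, ← L.tr_comp,
      ← L.tr_comp, M.assoc]
  have h := hs.lant1 M.A
  rw [tensorHom_id, tensorHom_id] at h
  calc Q.δ (L.d M.A) M.A ≫ ((T.map (L.tr M.a) ≫ s M.A) ⊗ₘ M.a) ≫ L.ev M.A
      = Q.δ _ _ ≫ ((T.map (L.tr M.a) ≫ s M.A) ≫ L.tr M.a) ▷ T.obj M.A ≫ L.ev (T.obj M.A) := by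
        rw [MonoidalCategory.tensorHom_def, Category.assoc, ← L.tr_whiskerRight_ev,
          ← comp_whiskerRight_assoc]
    _ = T.map (L.tr M.a ▷ M.A) ≫ Q.δ _ _
          ≫ (T.map (L.tr (T.μ.app M.A)) ≫ s (T.obj M.A)) ▷ T.obj M.A ≫ L.ev (T.obj M.A) := by
        rw [hs_tr, comp_whiskerRight_assoc, ← reassoc_of% (Q.δ_natural_left _ M.A)]
    _ = T.map (L.ev M.A) ≫ Q.ε := by
        rw [← h, ← T.map_comp_assoc, ← comp_whiskerRight, ← L.tr_comp, M.unit]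
        simp

lemma isCoevLinear (hs : IsLeftAntipode T Q L s) (M : T.Algebra) :
    IsCoevLinear Q L M (T.map (L.tr M.a) ≫ s M.A) := by
  have h := hs.lant2 M.A
  rw [tensorHom_id] at h
  calc T.map (L.coev M.A) ≫ Q.δ M.A (L.d M.A) ≫ (M.a ⊗ₘ (T.map (L.tr M.a) ≫ s M.A))
      = T.map (L.coev M.A ≫ M.A ◁ L.tr M.a) ≫ Q.δ _ _ ≫ (M.a ⊗ₘ s M.A) := by
        rw [← whiskerLeft_comp_tensorHom, T.map_comp_assoc,
          reassoc_of% (Q.δ_natural_right M.A (L.tr M.a))]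
    _ = T.map (L.coev (T.obj M.A)) ≫ Q.δ _ _ ≫ (T.μ.app M.A ⊗ₘ s M.A) ≫ M.a ▷ L.d M.A := by
        rw [L.coev_whiskerLeft_tr, T.map_comp_assoc, reassoc_of% (Q.δ_natural_left M.a _),
          whiskerRight_comp_tensorHom, tensorHom_comp_whiskerRight, M.assoc]
    _ = Q.ε ≫ L.coev M.A := by
        rw [← reassoc_of% h, ← comp_whiskerRight, M.unit]
        simp

lemma app_eq_comp_tr_η (hs : IsLeftAntipode T Q L s) (X : C) :
    s X = (T.map (L.tr (T.μ.app X)) ≫ s (T.obj X)) ≫ L.tr (T.η.app X) := by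
  rw [Category.assoc, ← hs.natural, ← T.map_comp_assoc, ← L.tr_comp, T.right_unit]
  simp

lemma unique {s' : ∀ X : C, T.obj (L.d (T.obj X)) ⟶ L.d X} (hs : IsLeftAntipode T Q L s)
    (hs' : IsLeftAntipode T Q L s') : s = s' := by
  funext X
  rw [hs.app_eq_comp_tr_η, hs'.app_eq_comp_tr_η]
  congr 1
  exact eq_of_isEvLinear (hs.isEvLinear (T.free.obj X)) (hs.isCoevLinear _) (hs'.isEvLinear _)

end IsLeftAntipode

section LeftDualModule

variable {T : Monad C} (Q : Comonoidal T.toFunctor)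

def IsLeftDualModule (M N : T.Algebra) (e : N.A ⊗ M.A ⟶ 𝟙_ C) (d : 𝟙_ C ⟶ M.A ⊗ N.A) :
    Prop :=
  ((Q.δ N.A M.A ≫ (N.a ⊗ₘ M.a)) ≫ e = T.map e ≫ Q.ε) ∧
  (Q.ε ≫ d = T.map d ≫ Q.δ M.A N.A ≫ (M.a ⊗ₘ N.a)) ∧
  ((ρ_ N.A).inv ≫ (𝟙 N.A ⊗ₘ d) ≫ (α_ N.A M.A N.A).inv
    ≫ (e ⊗ₘ 𝟙 N.A) ≫ (λ_ N.A).hom = 𝟙 N.A) ∧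
  ((λ_ M.A).inv ≫ (d ⊗ₘ 𝟙 M.A) ≫ (α_ M.A N.A M.A).hom
    ≫ (𝟙 M.A ⊗ₘ e) ≫ (ρ_ M.A).hom = 𝟙 M.A)

variable {Q} {L : LeftDualData C}

lemma IsLeftDualModule.exists_isEvLinear_isCoevLinear {M N : T.Algebra}
    {e : N.A ⊗ M.A ⟶ 𝟙_ C} {d : 𝟙_ C ⟶ M.A ⊗ N.A} (h : IsLeftDualModule Q M N e d) :
    ∃ a, IsEvLinear Q L M a ∧ IsCoevLinear Q L M a := by
  obtain ⟨he, hd, hsnake, hzigzag⟩ := h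
  change snake e d = 𝟙 _ at hsnake
  change zigzag d e = 𝟙 _ at hzigzag
  set u := snake e (L.coev M.A)
  set v := snake (L.ev M.A) d
  have hu : u ▷ M.A ≫ L.ev M.A = e := by
    rw [snake_whiskerRight_comp, L.zigzag_coev_ev, whiskerLeft_id, Category.id_comp]
  have hv : v ▷ M.A ≫ e = L.ev M.A := by
    rw [snake_whiskerRight_comp, hzigzag, whiskerLeft_id, Category.id_comp]
  have hdu : d ≫ M.A ◁ u = L.coev M.A := by
    rw [comp_whiskerLeft_snake, hzigzag, id_whiskerRight, Category.comp_id]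
  have huv : u ≫ v = 𝟙 N.A := by rw [comp_snake, hu, hsnake]
  refine ⟨T.map v ≫ N.a ≫ u, ?_, ?_⟩
  · rw [IsEvLinear, ← whiskerRight_comp_tensorHom, ← tensorHom_comp_whiskerRight, Category.assoc,
      Category.assoc, hu, ← reassoc_of% (Q.δ_natural_left v M.A), ← Category.assoc (Q.δ _ _), he,
      ← T.map_comp_assoc, hv]
  · rw [IsCoevLinear, ← hdu, T.map_comp_assoc, reassoc_of% (Q.δ_natural_right M.A u),
      whiskerLeft_comp_tensorHom, ← T.map_comp_assoc, huv, T.map_id, Category.id_comp,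
      ← tensorHom_comp_whiskerLeft, ← reassoc_of% hd]

end LeftDualModule

section AntipodeOfDuals

variable {T : Monad C} {Q : Comonoidal T.toFunctor} {L : LeftDualData C}

lemma isLeftAntipode_of_free_duals (a : ∀ X : C, T.obj (L.d (T.obj X)) ⟶ L.d (T.obj X))
    (hev : ∀ X, IsEvLinear Q L (T.free.obj X) (a X))
    (hcoev : ∀ X, IsCoevLinear Q L (T.free.obj X) (a X)) :
    IsLeftAntipode T Q L (fun X => a X ≫ L.tr (T.η.app X)) := by
  have intertwine {X Y : C} (φ : T.obj X ⟶ T.obj Y)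
      (hφ : T.map φ ≫ T.μ.app Y = T.μ.app X ≫ φ) : T.map (L.tr φ) ≫ a X = a Y ≫ L.tr φ :=
    map_tr_comp_eq_comp_tr (hev X) (hcoev X) (hev Y) ⟨φ, hφ⟩
  -- restated over `T.obj X`: rewriting does not see through `(T.free.obj X).A`
  have hev_free (X : C) : Q.δ (L.d (T.obj X)) (T.obj X) ≫ (a X ⊗ₘ T.μ.app X) ≫ L.ev (T.obj X)
      = T.map (L.ev (T.obj X)) ≫ Q.ε := hev X
  have hcoev_free (X : C) : T.map (L.coev (T.obj X)) ≫ Q.δ (T.obj X) (L.d (T.obj X))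
      ≫ (T.μ.app X ⊗ₘ a X) = Q.ε ≫ L.coev (T.obj X) := hcoev X
  have map_tr_μ (X : C) : T.map (L.tr (T.μ.app X)) ≫ a (T.obj X) ≫ L.tr (T.η.app (T.obj X))
      = a X := by
    rw [← Category.assoc, intertwine _ (T.assoc X), Category.assoc, ← L.tr_comp,
      T.left_unit]
    simp
  refine ⟨fun {X Y} f => ?_, fun X => ?_, fun X => ?_⟩
  · rw [← Category.assoc, intertwine _ (T.μ.naturality f), Category.assoc, ← L.tr_comp,
      ← T.η.naturality f]
    simp [L.tr_comp]
  · have h := L.tr_whiskerRight_ev (T.η.app X)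
    dsimp only [Functor.id_obj] at h
    rw [map_tr_μ, tensorHom_id, tensorHom_id, ← T.map_comp_assoc, h,
      T.map_comp_assoc, ← hev_free X, reassoc_of% (Q.δ_natural_right _ (T.η.app X)),
      whiskerLeft_comp_tensorHom_assoc, T.right_unit]
    simp
  · rw [tensorHom_id, ← L.coev_whiskerLeft_tr, ← tensorHom_comp_whiskerLeft,
      reassoc_of% (hcoev_free X)]

end AntipodeOfDuals

/-- For a bimonad `T` on a left autonomous category `C` (with chosen
left duals `L`): `T` admits a left antipode iff every `T`-module has a left dual in
the monoidal category of `T`-modules; a left antipode is unique; and in terms of a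
left antipode `s^l`, the left dual of a `T`-module `(M,r)` is
`(ˡM, s^l_M ∘ T(ˡr))` with evaluation `ev_M` and coevaluation `coev_M`. -/
theorem stmt7 (T : Monad C) (Q : Comonoidal T.toFunctor) (hB : IsBimonad T Q)
    (L : LeftDualData C) :
    ((∃ s : ∀ X : C, T.obj (L.d (T.obj X)) ⟶ L.d X, IsLeftAntipode T Q L s) ↔
      (∀ M : T.Algebra, ∃ (N : T.Algebra) (e : N.A ⊗ M.A ⟶ 𝟙_ C)
          (d : 𝟙_ C ⟶ M.A ⊗ N.A),
        -- `e` and `d` are morphisms of `T`-modules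
        ((Q.δ N.A M.A ≫ (N.a ⊗ₘ M.a)) ≫ e = T.map e ≫ Q.ε) ∧
        (Q.ε ≫ d = T.map d ≫ Q.δ M.A N.A ≫ (M.a ⊗ₘ N.a)) ∧
        -- triangle identities: `(N, e, d)` is a left dual of `M`
        ((ρ_ N.A).inv ≫ (𝟙 N.A ⊗ₘ d) ≫ (α_ N.A M.A N.A).inv
          ≫ (e ⊗ₘ 𝟙 N.A) ≫ (λ_ N.A).hom = 𝟙 N.A) ∧
        ((λ_ M.A).inv ≫ (d ⊗ₘ 𝟙 M.A) ≫ (α_ M.A N.A M.A).hom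
          ≫ (𝟙 M.A ⊗ₘ e) ≫ (ρ_ M.A).hom = 𝟙 M.A))) ∧
    (∀ s s' : ∀ X : C, T.obj (L.d (T.obj X)) ⟶ L.d X,
      IsLeftAntipode T Q L s → IsLeftAntipode T Q L s' → s = s') ∧
    (∀ s : ∀ X : C, T.obj (L.d (T.obj X)) ⟶ L.d X, IsLeftAntipode T Q L s →
      ∀ M : T.Algebra,
        -- `(ˡM, s^l_M ∘ T(ˡr))` is a `T`-module ...
        (T.η.app (L.d M.A) ≫ T.map (L.tr M.a) ≫ s M.A = 𝟙 (L.d M.A)) ∧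
        (T.μ.app (L.d M.A) ≫ T.map (L.tr M.a) ≫ s M.A
          = T.map (T.map (L.tr M.a) ≫ s M.A) ≫ T.map (L.tr M.a) ≫ s M.A) ∧
        -- ... and `ev_M`, `coev_M` are `T`-linear, so it is a left dual of `(M,r)`
        ((Q.δ (L.d M.A) M.A ≫ ((T.map (L.tr M.a) ≫ s M.A) ⊗ₘ M.a)) ≫ L.ev M.A
          = T.map (L.ev M.A) ≫ Q.ε) ∧
        (Q.ε ≫ L.coev M.A
          = T.map (L.coev M.A) ≫ Q.δ M.A (L.d M.A)
              ≫ (M.a ⊗ₘ (T.map (L.tr M.a) ≫ s M.A)))) := by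
  refine ⟨⟨fun ⟨s, hs⟩ M => ?_, fun hdual => ?_⟩, fun s s' hs hs' => hs.unique hs',
    fun s hs M => ?_⟩
  · have hev := hs.isEvLinear M
    have hcoev := hs.isCoevLinear M
    exact ⟨⟨L.d M.A, _, hev.unit hB, hev.assoc hB hcoev⟩, L.ev M.A, L.coev M.A,
      (Category.assoc _ _ _).trans hev, hcoev.symm, L.tri1 M.A, L.tri2 M.A⟩
  · have free_dual (X : C) :
        ∃ a, IsEvLinear Q L (T.free.obj X) a ∧ IsCoevLinear Q L (T.free.obj X) a := by
      obtain ⟨N, e, d, h⟩ := hdual (T.free.obj X)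
      exact IsLeftDualModule.exists_isEvLinear_isCoevLinear h
    choose a hev hcoev using free_dual
    exact ⟨_, isLeftAntipode_of_free_duals a hev hcoev⟩
  · have hev := hs.isEvLinear M
    have hcoev := hs.isCoevLinear M
    exact ⟨hev.unit hB, hev.assoc hB hcoev, (Category.assoc _ _ _).trans hev,
      hcoev.symm⟩

end HopfMonadPaper
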